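/- Let A, B be n×n Hermitian matrices such that A - B has rank at most 2 with eigenvalues -r, 0, ..., 0, r for some r ≥ 0 (i.e. A - B has one eigenvalue r, one eigenvalue -r, and all others zero). Let λ_1 ≥ ··· ≥ λ_n be the eigenvalues of A and μ_1 ≥ ··· ≥ μ_n the eigenvalues of B. Then the alternating sum ∑_{k=1}^{n} (-1)^{n-k}(λ_k - μ_k) is at most 4r. -/

import Mathlib

/-!
Write `D = A - B = D⁺ - D⁻` and `C = B + D⁺ = A + D⁻`. Since `C - A` and `C - B` are positive
semidefinite, Weyl's monotonicity gives `λ_k ≤ ν_k` and `μ_k ≤ ν_k` for the decreasingly ordered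
eigenvalues `ν` of `C`: the span of the first `k + 1` eigenvectors of `A` meets the span of the
last `n - k` eigenvectors of `C`, and a common unit vector `x` has
`λ_k ≤ ⟪x, A x⟫ ≤ ⟪x, C x⟫ ≤ ν_k`. Hence `|λ_k - μ_k| ≤ (ν_k - λ_k) + (ν_k - μ_k)`, and summing
over `k` turns the right side into `tr D⁻ + tr D⁺ = ∑ |eigenvalues of D| = 2 r`.
-/

open Module RCLike
open scoped InnerProductSpace MatrixOrder ComplexOrder

theorem Submodule.exists_mem_inf_ne_zero_of_finrank_lt {K V : Type*} [DivisionRing K]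
    [AddCommGroup V] [Module K V] [FiniteDimensional K V] {U W : Submodule K V}
    (h : finrank K V < finrank K U + finrank K W) : ∃ x ∈ U ⊓ W, x ≠ 0 := by
  by_contra! hUW
  have hbot : U ⊓ W = ⊥ := (Submodule.eq_bot_iff _).mpr hUW
  have := Submodule.finrank_sup_add_finrank_inf_eq U W
  rw [hbot, finrank_bot] at this
  have := Submodule.finrank_le (U ⊔ W)
  omega

theorem OrthonormalBasis.finrank_span_image {ι 𝕜 E : Type*} [RCLike 𝕜] [NormedAddCommGroup E]
    [InnerProductSpace 𝕜 E] [Fintype ι] (b : OrthonormalBasis ι 𝕜 E) (s : Finset ι) :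
    finrank 𝕜 (Submodule.span 𝕜 (b '' s)) = s.card := by
  rw [Set.image_eq_range]
  exact (finrank_span_eq_card (b := fun i : (s : Set ι) => b i)
    (b.orthonormal.linearIndependent.comp _ Subtype.val_injective)).trans (by simp)

theorem OrthonormalBasis.mem_of_repr_ne_zero {ι 𝕜 E : Type*} [RCLike 𝕜] [NormedAddCommGroup E]
    [InnerProductSpace 𝕜 E] [Fintype ι] (b : OrthonormalBasis ι 𝕜 E) {s : Set ι} {x : E}
    (hx : x ∈ Submodule.span 𝕜 (b '' s)) {i : ι} (hi : b.repr x i ≠ 0) : i ∈ s := by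
  rw [← b.coe_toBasis, Basis.mem_span_image] at hx
  exact hx (by simpa using hi)

namespace LinearMap.IsSymmetric

variable {𝕜 E : Type*} [RCLike 𝕜] [NormedAddCommGroup E] [InnerProductSpace 𝕜 E]
  [FiniteDimensional 𝕜 E] {n : ℕ} {T S : E →ₗ[𝕜] E}

theorem re_inner_apply_self_eq_sum (hT : T.IsSymmetric) (hn : finrank 𝕜 E = n) (x : E) :
    re ⟪x, T x⟫_𝕜 = ∑ i, hT.eigenvalues hn i * ‖(hT.eigenvectorBasis hn).repr x i‖ ^ 2 := by
  rw [← (hT.eigenvectorBasis hn).repr.inner_map_map, PiLp.inner_apply, map_sum]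
  refine Finset.sum_congr rfl fun i _ => ?_
  rw [eigenvectorBasis_apply_self_apply, ← smul_eq_mul, inner_smul_right,
    inner_self_eq_norm_sq_to_K]
  norm_cast

theorem le_re_inner_apply_self (hT : T.IsSymmetric) (hn : finrank 𝕜 E = n) {c : ℝ} {x : E}
    (hx : ∀ i, (hT.eigenvectorBasis hn).repr x i ≠ 0 → c ≤ hT.eigenvalues hn i) :
    c * ‖x‖ ^ 2 ≤ re ⟪x, T x⟫_𝕜 := by
  rw [← (hT.eigenvectorBasis hn).repr.norm_map, EuclideanSpace.norm_sq_eq,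
    hT.re_inner_apply_self_eq_sum hn, Finset.mul_sum]
  refine Finset.sum_le_sum fun i _ => ?_
  by_cases h : (hT.eigenvectorBasis hn).repr x i = 0
  · simp [h]
  · exact mul_le_mul_of_nonneg_right (hx i h) (sq_nonneg _)

theorem re_inner_apply_self_le (hT : T.IsSymmetric) (hn : finrank 𝕜 E = n) {c : ℝ} {x : E}
    (hx : ∀ i, (hT.eigenvectorBasis hn).repr x i ≠ 0 → hT.eigenvalues hn i ≤ c) :
    re ⟪x, T x⟫_𝕜 ≤ c * ‖x‖ ^ 2 := by
  rw [← (hT.eigenvectorBasis hn).repr.norm_map, EuclideanSpace.norm_sq_eq,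
    hT.re_inner_apply_self_eq_sum hn, Finset.mul_sum]
  refine Finset.sum_le_sum fun i _ => ?_
  by_cases h : (hT.eigenvectorBasis hn).repr x i = 0
  · simp [h]
  · exact mul_le_mul_of_nonneg_right (hx i h) (sq_nonneg _)

theorem eigenvalues_le_of_isPositive_sub (hT : T.IsSymmetric) (hS : S.IsSymmetric)
    (hn : finrank 𝕜 E = n) (hST : (S - T).IsPositive) (i : Fin n) :
    hT.eigenvalues hn i ≤ hS.eigenvalues hn i := by
  set b := hT.eigenvectorBasis hn
  set b' := hS.eigenvectorBasis hn
  obtain ⟨x, ⟨hxT, hxS⟩, hx0⟩ := Submodule.exists_mem_inf_ne_zero_of_finrank_lt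
    (U := Submodule.span 𝕜 (b '' (Finset.Iic i))) (W := Submodule.span 𝕜 (b' '' (Finset.Ici i)))
    (by rw [b.finrank_span_image, b'.finrank_span_image, hn, Fin.card_Iic, Fin.card_Ici]; omega)
  have hTS : re ⟪x, T x⟫_𝕜 ≤ re ⟪x, S x⟫_𝕜 := by
    have := hST.re_inner_nonneg_right x
    rwa [sub_apply, inner_sub_right, map_sub, sub_nonneg] at this
  have hlow : hT.eigenvalues hn i * ‖x‖ ^ 2 ≤ re ⟪x, T x⟫_𝕜 :=
    hT.le_re_inner_apply_self hn fun j hj =>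
      hT.eigenvalues_antitone hn (by simpa using b.mem_of_repr_ne_zero hxT hj)
  have hup : re ⟪x, S x⟫_𝕜 ≤ hS.eigenvalues hn i * ‖x‖ ^ 2 :=
    hS.re_inner_apply_self_le hn fun j hj =>
      hS.eigenvalues_antitone hn (by simpa using b'.mem_of_repr_ne_zero hxS hj)
  exact le_of_mul_le_mul_right (hlow.trans (hTS.trans hup)) (by positivity)

end LinearMap.IsSymmetric

namespace Matrix.IsHermitian

variable {𝕜 : Type*} [RCLike 𝕜] {n : Type*} [Fintype n] [DecidableEq n] {A B : Matrix n n 𝕜}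

theorem re_trace_eq_sum_eigenvalues (hA : A.IsHermitian) :
    re A.trace = ∑ i, hA.eigenvalues i := by
  simp [hA.trace_eq_sum_eigenvalues]

theorem sum_eigenvalues₀ (hA : A.IsHermitian) : ∑ i, hA.eigenvalues₀ i = re A.trace :=
  (Equiv.sum_comp _ _).symm.trans hA.re_trace_eq_sum_eigenvalues.symm

theorem re_trace_cfc (hA : A.IsHermitian) (f : ℝ → ℝ) :
    re (cfc f A).trace = ∑ i, f (hA.eigenvalues i) := by
  rw [hA.cfc_eq, IsHermitian.cfc, Unitary.conjStarAlgAut_apply, trace_mul_cycle,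
    Unitary.coe_star_mul_self, one_mul, trace_diagonal]
  simp

theorem re_trace_posPart (hA : A.IsHermitian) : re (A⁺).trace = ∑ i, (hA.eigenvalues i)⁺ := by
  rw [CFC.posPart_def, cfcₙ_eq_cfc, hA.re_trace_cfc]

theorem re_trace_negPart (hA : A.IsHermitian) : re (A⁻).trace = ∑ i, (hA.eigenvalues i)⁻ := by
  rw [CFC.negPart_def, cfcₙ_eq_cfc, hA.re_trace_cfc]

theorem eigenvalues₀_le_of_posSemidef_sub (hA : A.IsHermitian) (hB : B.IsHermitian)
    (hAB : (B - A).PosSemidef) (i : Fin (Fintype.card n)) :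
    hA.eigenvalues₀ i ≤ hB.eigenvalues₀ i :=
  LinearMap.IsSymmetric.eigenvalues_le_of_isPositive_sub _ _ _
    (by rwa [← map_sub, isPositive_toEuclideanLin_iff]) i

theorem sum_abs_eigenvalues₀_sub_le (hA : A.IsHermitian) (hB : B.IsHermitian)
    (hD : (A - B).IsHermitian) :
    ∑ i, |hA.eigenvalues₀ i - hB.eigenvalues₀ i| ≤ ∑ i, |hD.eigenvalues i| := by
  have hP : (A - B)⁺.PosSemidef := nonneg_iff_posSemidef.mp (CFC.posPart_nonneg _)
  have hN : (A - B)⁻.PosSemidef := nonneg_iff_posSemidef.mp (CFC.negPart_nonneg _)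
  have hC : (B + (A - B)⁺).IsHermitian := hB.add hP.isHermitian
  have hCB : B + (A - B)⁺ - B = (A - B)⁺ := add_sub_cancel_left _ _
  have hCA : B + (A - B)⁺ - A = (A - B)⁻ := by
    rw [sub_eq_iff_eq_add.mp (CFC.posPart_sub_negPart (A - B) hD)]
    abel
  have hle : ∀ i, |hA.eigenvalues₀ i - hB.eigenvalues₀ i| ≤
      (hC.eigenvalues₀ i - hA.eigenvalues₀ i) + (hC.eigenvalues₀ i - hB.eigenvalues₀ i) := by
    intro i
    have hAC := hA.eigenvalues₀_le_of_posSemidef_sub hC (by rwa [hCA]) i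
    have hBC := hB.eigenvalues₀_le_of_posSemidef_sub hC (by rwa [hCB]) i
    rw [abs_sub_le_iff]
    constructor <;> linarith
  calc ∑ i, |hA.eigenvalues₀ i - hB.eigenvalues₀ i|
      ≤ ∑ i, ((hC.eigenvalues₀ i - hA.eigenvalues₀ i) + (hC.eigenvalues₀ i - hB.eigenvalues₀ i)) :=
        Finset.sum_le_sum fun i _ => hle i
    _ = re (A - B)⁻.trace + re (A - B)⁺.trace := by
        simp only [Finset.sum_add_distrib, Finset.sum_sub_distrib, sum_eigenvalues₀, ← map_sub,
          ← trace_sub, hCA, hCB]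
    _ = ∑ i, |hD.eigenvalues i| := by
        simp only [hD.re_trace_negPart, hD.re_trace_posPart, ← Finset.sum_add_distrib,
          negPart_add_posPart]

theorem eigenvalues_comp_eq_eigenvalues₀ {m : ℕ} {A : Matrix (Fin m) (Fin m) 𝕜}
    (hA : A.IsHermitian) {σ : Equiv.Perm (Fin m)} (hσ : Antitone (hA.eigenvalues ∘ σ)) :
    hA.eigenvalues ∘ σ = hA.eigenvalues₀ ∘ Fin.cast (Fintype.card_fin m).symm := by
  set τ : Equiv.Perm (Fin m) :=
    (finCongr (Fintype.card_fin m).symm).trans (Fintype.equivOfCardEq (Fintype.card_fin _))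
  have hτ : hA.eigenvalues ∘ τ = hA.eigenvalues₀ ∘ Fin.cast (Fintype.card_fin m).symm := by
    ext; simp [τ, eigenvalues]
  have hτ_anti : Antitone (hA.eigenvalues ∘ τ) :=
    hτ ▸ hA.eigenvalues₀_antitone.comp_monotone fun _ _ h => (Fin.cast_le_cast _).mpr h
  rw [Tuple.unique_antitone hσ hτ_anti, hτ]

end Matrix.IsHermitian

/-- If `A`, `B` are Hermitian `n × n` matrices such that `A - B` has eigenvalues
`r, 0, …, 0, -r` with `r ≥ 0`, and `λ_1 ≥ ⋯ ≥ λ_n`, `μ_1 ≥ ⋯ ≥ μ_n` are the eigenvalues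
of `A` and `B` respectively, then `∑_{k=1}^n (-1)^{n-k} (λ_k - μ_k) ≤ 4 r`. -/
theorem stmt_5 {n : ℕ} (hn : 2 ≤ n) (r : ℝ) (hr : 0 ≤ r)
    (A B : Matrix (Fin n) (Fin n) ℂ)
    (hA : A.IsHermitian) (hB : B.IsHermitian) (hD : (A - B).IsHermitian)
    (lam mu ED : Fin n → ℝ)
    (hlam : Antitone lam) (hmu : Antitone mu)
    (hlamE : ∃ σ : Equiv.Perm (Fin n), lam = hA.eigenvalues ∘ σ)
    (hmuE : ∃ σ : Equiv.Perm (Fin n), mu = hB.eigenvalues ∘ σ)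
    (hEDE : ∃ σ : Equiv.Perm (Fin n), ED = hD.eigenvalues ∘ σ)
    (hED0 : ED ⟨0, by omega⟩ = r) (hEDn : ED ⟨n - 1, by omega⟩ = -r)
    (hEDmid : ∀ j : Fin n, 0 < (j : ℕ) → (j : ℕ) < n - 1 → ED j = 0) :
    ∑ j : Fin n, (-1 : ℝ) ^ (n - 1 - (j : ℕ)) * (lam j - mu j) ≤ 4 * r := by
  obtain ⟨σA, rfl⟩ := hlamE
  obtain ⟨σB, rfl⟩ := hmuE
  obtain ⟨σD, rfl⟩ := hEDE
  have hspectrum : ∑ i, |hD.eigenvalues i| = 2 * r := by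
    rw [← Equiv.sum_comp σD, Fintype.sum_eq_add ⟨0, by omega⟩ ⟨n - 1, by omega⟩
      (by simp [Fin.ext_iff]; omega)]
    · simp only [Function.comp_apply] at hED0 hEDn
      rw [hED0, hEDn, abs_neg, abs_of_nonneg hr, two_mul]
    · intro j ⟨h0, hlast⟩
      simp only [ne_eq, Fin.ext_iff] at h0 hlast
      rw [show hD.eigenvalues (σD j) = 0 from hEDmid j (by omega) (by omega), abs_zero]
  calc _ ≤ ∑ j, |(hA.eigenvalues ∘ σA) j - (hB.eigenvalues ∘ σB) j| :=
        Finset.sum_le_sum fun j _ =>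
          (le_abs_self _).trans (by rw [abs_mul, abs_neg_one_pow, one_mul])
    _ = ∑ i, |hA.eigenvalues₀ i - hB.eigenvalues₀ i| := by
        rw [hA.eigenvalues_comp_eq_eigenvalues₀ hlam, hB.eigenvalues_comp_eq_eigenvalues₀ hmu]
        exact Equiv.sum_comp (finCongr (Fintype.card_fin n).symm)
          fun i => |hA.eigenvalues₀ i - hB.eigenvalues₀ i|
    _ ≤ ∑ i, |hD.eigenvalues i| := hA.sum_abs_eigenvalues₀_sub_le hB hD
    _ ≤ 4 * r := by linarith
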